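/- arXiv:1509.01633 — 5 statements merged into one kernel-verified Lean document; each statement's English description precedes it below -/
import Mathlib

section
/- Assume in addition that k is algebraically closed. If V is a finite-dimensional simple left A-module, then the matrix coefficient map β_V : V ⊗_k V* → A* is injective. -/
/-!
Matrix coefficients.  `k` is a field, `A` an associative unital `k`-algebra, and `V` a
left `A`-module which is also a `k`-vector space compatibly.  The matrix coefficient map
`β_V : V ⊗[k] V* → A*` is the `k`-linear map determined by `β_V (v ⊗ f) a = f (a • v)`.
-/

open TensorProduct

/-- The matrix coefficient map `β_V : V ⊗[k] V* → A*`, `β_V (v ⊗ f) a = f (a • v)`. -/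
noncomputable def matrixCoeff (k A V : Type*) [Field k] [Ring A] [Algebra k A]
    [AddCommGroup V] [Module k V] [Module A V] [IsScalarTower k A V] :
    V ⊗[k] Module.Dual k V →ₗ[k] Module.Dual k A :=
  TensorProduct.lift
  { toFun := fun v =>
      { toFun := fun f =>
          { toFun := fun a => f (a • v)
            map_add' := fun a b => by simp [add_smul]
            map_smul' := fun c a => by simp [smul_assoc] }
        map_add' := fun f g => rfl
        map_smul' := fun c f => rfl }
    map_add' := fun v w => by
      ext f a
      simp [smul_add]
    map_smul' := fun c v => by
      ext f a
      show f (a • c • v) = c • f (a • v)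
      rw [smul_comm a c v, map_smul] }

section Aux

variable {k A V : Type*} [Field k] [Ring A] [Algebra k A]
  [AddCommGroup V] [Module k V] [Module A V] [IsScalarTower k A V]

/-- The action of `a : A` on `V` as a `k`-linear endomorphism. -/
def actEnd (k : Type*) [Field k] [Algebra k A] [Module k V] [IsScalarTower k A V] (a : A) :
    V →ₗ[k] V where
  toFun := fun v => a • v
  map_add' := smul_add a
  map_smul' := fun c v => (smul_comm c a v).symm

@[simp] lemma actEnd_apply (a : A) (v : V) : actEnd k a v = a • v := rfl

/-- Schur's lemma over an algebraically closed field: any `A`-equivariant `k`-linear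
endomorphism of a finite-dimensional simple module is a scalar. -/
lemma schur_scalar [IsAlgClosed k] [FiniteDimensional k V] [IsSimpleModule A V]
    (f : V →ₗ[k] V) (hf : ∀ (a : A) (v : V), f (a • v) = a • f v) :
    ∃ c : k, ∀ v : V, f v = c • v := by
  have : Nontrivial V := IsSimpleModule.nontrivial A V
  obtain ⟨μ, hμ⟩ := Module.End.exists_eigenvalue (f : Module.End k V)
  obtain ⟨v, hv⟩ := hμ.exists_hasEigenvector
  let W : Submodule A V :=
    { carrier := {x | f x = μ • x}
      add_mem' := fun hx hy => by
        simp only [Set.mem_setOf_eq] at *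
        rw [map_add, hx, hy, smul_add]
      zero_mem' := by simp
      smul_mem' := fun a x hx => by
        simp only [Set.mem_setOf_eq] at *
        rw [hf, hx, smul_comm] }
  have hW : W = ⊤ := by
    rcases eq_bot_or_eq_top W with h | h
    · exfalso
      have hvW : v ∈ W := Module.End.mem_eigenspace_iff.mp hv.1
      rw [h, Submodule.mem_bot] at hvW
      exact hv.2 hvW
    · exact h
  exact ⟨μ, fun x => by
    have hx : x ∈ W := hW ▸ Submodule.mem_top
    exact hx⟩

/-- The (finite-dimensional) Jacobson density theorem over an algebraically closed field. -/
lemma density [IsAlgClosed k] [FiniteDimensional k V] [IsSimpleModule A V] :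
    ∀ (m : ℕ) (v : Fin m → V), LinearIndependent k v →
      ∀ w : Fin m → V, ∃ a : A, ∀ i, a • v i = w i := by
  intro m
  induction m with
  | zero => exact fun v _ w => ⟨0, fun i => i.elim0⟩
  | succ m ih =>
    intro v hv w
    rw [← Fin.snoc_init_self v, linearIndependent_fin_snoc] at hv
    obtain ⟨hv', hvl⟩ := hv
    set vl := v (Fin.last m) with hvl_def
    let N : Submodule A V :=
      { carrier := {x | ∃ a : A, (∀ i : Fin m, a • Fin.init v i = 0) ∧ a • vl = x}
        add_mem' := by
          rintro x y ⟨a, ha, hax⟩ ⟨b, hb, hbx⟩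
          exact ⟨a + b, fun i => by rw [add_smul, ha i, hb i, add_zero],
            by rw [add_smul, hax, hbx]⟩
        zero_mem' := ⟨0, fun i => zero_smul _ _, zero_smul _ _⟩
        smul_mem' := by
          rintro b x ⟨a, ha, hax⟩
          exact ⟨b * a, fun i => by rw [mul_smul, ha i, smul_zero],
            by rw [mul_smul, hax]⟩ }
    rcases eq_bot_or_eq_top N with hN | hN
    · -- impossible: it would force `vl` into the span of the other vectors
      exfalso
      have key : ∀ a b : A, (∀ i : Fin m, a • Fin.init v i = b • Fin.init v i) →
          a • vl = b • vl := by
        intro a b hab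
        have hmem : (a - b) • vl ∈ N :=
          ⟨a - b, fun i => by rw [sub_smul, hab i, sub_self], rfl⟩
        rw [hN, Submodule.mem_bot, sub_smul, sub_eq_zero] at hmem
        exact hmem
      choose F hF using fun (j : Fin m) (x : V) =>
        ih (Fin.init v) hv' (fun i => if i = j then x else 0)
      have hschur : ∀ j : Fin m, ∃ c : k, ∀ x, F j x • vl = c • x := by
        intro j
        let g : V →ₗ[k] V :=
          { toFun := fun x => F j x • vl
            map_add' := fun x y => by
              have h := key (F j (x + y)) (F j x + F j y) (fun i => by
                rw [add_smul, hF j x i, hF j y i, hF j (x + y) i]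
                split <;> simp)
              simpa [add_smul] using h
            map_smul' := fun c x => by
              have h := key (F j (c • x)) ((c • (1 : A)) * F j x) (fun i => by
                rw [mul_smul, hF j x i, hF j (c • x) i]
                split <;> simp [smul_assoc])
              simp only [RingHom.id_apply]
              rw [h, mul_smul, smul_assoc, one_smul] }
        have hg : ∀ (a : A) (x : V), g (a • x) = a • g x := by
          intro a x
          have h := key (F j (a • x)) (a * F j x) (fun i => by
            rw [mul_smul, hF j x i, hF j (a • x) i]
            split <;> simp)
          show F j (a • x) • vl = a • (F j x • vl)
          rw [h, mul_smul]
        obtain ⟨c, hc⟩ := schur_scalar g hg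
        exact ⟨c, fun x => hc x⟩
      choose c hc using hschur
      have hsum : vl = ∑ j : Fin m, c j • Fin.init v j := by
        have h1 : (1 : A) • vl = (∑ j, F j (Fin.init v j)) • vl := by
          refine key 1 _ (fun i => ?_)
          rw [one_smul, Finset.sum_smul,
            Finset.sum_congr rfl (fun j _ => hF j (Fin.init v j) i)]
          simp
        rw [one_smul] at h1
        rw [h1, Finset.sum_smul]
        exact Finset.sum_congr rfl fun j _ => hc j (Fin.init v j)
      exact hvl (hsum ▸ Submodule.sum_mem _ fun j _ =>
        Submodule.smul_mem _ _ (Submodule.subset_span ⟨j, rfl⟩))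
    · obtain ⟨a₁, ha₁⟩ := ih (Fin.init v) hv' (Fin.init w)
      have hmem : w (Fin.last m) - a₁ • vl ∈ N := hN ▸ Submodule.mem_top
      obtain ⟨a₀, ha₀, ha₀x⟩ := hmem
      refine ⟨a₁ + a₀, fun i => ?_⟩
      refine Fin.lastCases ?_ (fun j => ?_) i
      · rw [add_smul, ha₀x, ← hvl_def]
        abel
      · have h1 : a₁ • v (Fin.castSucc j) = w (Fin.castSucc j) := ha₁ j
        have h0 : a₀ • v (Fin.castSucc j) = (0 : V) := ha₀ j
        rw [add_smul, h1, h0, add_zero]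

/-- Burnside: for a finite-dimensional simple module over an algebraically closed field,
the algebra acts by *all* `k`-linear endomorphisms. -/
lemma act_surjective [IsAlgClosed k] [FiniteDimensional k V] [IsSimpleModule A V]
    (T : V →ₗ[k] V) : ∃ a : A, ∀ x : V, a • x = T x := by
  let b := Module.finBasis k V
  obtain ⟨a, ha⟩ := density (A := A) (Module.finrank k V) b b.linearIndependent
    (fun i => T (b i))
  refine ⟨a, fun x => ?_⟩
  have hT : actEnd k a = T := b.ext fun i => by simpa using ha i
  calc a • x = actEnd k a x := rfl
  _ = T x := by rw [hT]

lemma matrixCoeff_eq_trace [FiniteDimensional k V] (t : V ⊗[k] Module.Dual k V) (a : A) :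
    matrixCoeff k A V t a =
      LinearMap.trace k V ((actEnd k a) ∘ₗ
        dualTensorHom k V V (TensorProduct.comm k V (Module.Dual k V) t)) := by
  induction t using TensorProduct.induction_on with
  | zero => simp
  | tmul v f =>
    have h : actEnd k (V := V) a ∘ₗ dualTensorHom k V V (f ⊗ₜ[k] v)
        = dualTensorHom k V V (f ⊗ₜ[k] (a • v)) := by
      ext w
      simp only [LinearMap.comp_apply, dualTensorHom_apply, actEnd_apply]
      exact (smul_comm ((f : Module.Dual k V) w) a v).symm
    rw [TensorProduct.comm_tmul, h, LinearMap.trace_eq_contract_apply, contractLeft_apply]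
    rfl
  | add x y hx hy => simp [map_add, LinearMap.add_apply, LinearMap.comp_add, hx, hy]

end Aux

/-- over an algebraically closed field, the matrix coefficient map of a
finite-dimensional simple module is injective. -/
theorem matrixCoeff_injective_of_simple (k A V : Type*) [Field k] [IsAlgClosed k] [Ring A]
    [Algebra k A] [AddCommGroup V] [Module k V] [Module A V] [IsScalarTower k A V]
    [FiniteDimensional k V] [IsSimpleModule A V] :
    Function.Injective (matrixCoeff k A V) := by
  refine (injective_iff_map_eq_zero _).mpr fun t ht => ?_
  by_contra h0
  set t' := TensorProduct.comm k V (Module.Dual k V) t with ht'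
  have ht'0 : t' ≠ 0 := fun h => h0 ((LinearEquiv.map_eq_zero_iff _).mp h)
  set S := dualTensorHom k V V t' with hS
  have hSne : S ≠ 0 := by
    intro hz
    apply ht'0
    have := dualTensorHomEquivOfBasis_symm_cancel_left (N := V) (Module.finBasis k V) t'
    rw [← hS, hz, map_zero] at this
    exact this.symm
  -- trace of `T ∘ S` vanishes for every `T`
  have htr : ∀ T : V →ₗ[k] V, LinearMap.trace k V (T ∘ₗ S) = 0 := by
    intro T
    obtain ⟨a, ha⟩ := act_surjective (A := A) T
    have hTa : actEnd k a = T := LinearMap.ext ha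
    have := matrixCoeff_eq_trace (k := k) (A := A) (V := V) t a
    rw [ht] at this
    rw [← hTa, hS, ht']
    exact this.symm.trans rfl
  -- but `S ≠ 0` gives a `T` with nonzero trace
  obtain ⟨w, hw⟩ : ∃ w : V, S w ≠ 0 := by
    by_contra h
    push_neg at h
    exact hSne (LinearMap.ext fun w => by simpa using h w)
  obtain ⟨g, hg⟩ : ∃ g : Module.Dual k V, g (S w) ≠ 0 := by
    by_contra h
    push_neg at h
    exact hw ((Module.forall_dual_apply_eq_zero_iff k (S w)).mp h)
  have hcomp : (g.smulRight w) ∘ₗ S = dualTensorHom k V V ((g ∘ₗ S) ⊗ₜ[k] w) := by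
    ext x
    simp
  have := htr (g.smulRight w)
  rw [hcomp, LinearMap.trace_eq_contract_apply, contractLeft_apply] at this
  exact hg (by simpa using this)
end

section
/- Assume in addition that k is algebraically closed. Let V₁, …, Vₙ be pairwise non-isomorphic finite-dimensional simple left A-modules. Then the subspaces β_{V_i}(V_i ⊗_k V_i*) ⊆ A* are linearly independent: if x_i ∈ β_{V_i}(V_i ⊗_k V_i*) for each i and x₁ + ⋯ + xₙ = 0 in A*, then x_i = 0 for every i. In particular their sum in A* is direct. -/
/-!
Matrix coefficients.  `k` is a field, `A` an associative unital `k`-algebra, and `V` a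
left `A`-module which is also a `k`-vector space compatibly.  The matrix coefficient map
`β_V : V ⊗[k] V* → A*` is the `k`-linear map determined by `β_V (v ⊗ f) a = f (a • v)`.
-/

open TensorProduct

/-!
By Schur's lemma every `A`-endomorphism of `M = ∏ⱼ Vⱼ` is block diagonal, so the coordinate
projection onto `Vᵢ` commutes with all of them. As `M` is semisimple and finite over its
endomorphism ring, the Jacobson density theorem realises this projection by some `a ∈ A`, which
then acts as `1` on `Vᵢ` and as `0` on every other `Vⱼ`. Hence `x j (a * c)` is `x i c` for
`j = i` and `0` otherwise, and evaluating `∑ j, x j = 0` at `a * c` gives `x i c = 0`.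
-/

open Module

theorem LinearMap.eq_zero_of_isEmpty_linearEquiv {R M N : Type*} [Ring R] [AddCommGroup M]
    [Module R M] [AddCommGroup N] [Module R N] [IsSimpleModule R M] [IsSimpleModule R N]
    [IsEmpty (M ≃ₗ[R] N)] (f : M →ₗ[R] N) : f = 0 := by
  by_contra hf
  exact IsEmpty.false (LinearEquiv.ofBijective f (bijective_of_ne_zero hf))

theorem Module.End.commute_single_comp_proj {R ι : Type*} [Semiring R] [Finite ι] [DecidableEq ι]
    {M : ι → Type*} [∀ i, AddCommMonoid (M i)] [∀ i, Module R (M i)]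
    (hM : ∀ j l, j ≠ l → ∀ g : M j →ₗ[R] M l, g = 0) (g : End R (Π j, M j)) (i : ι) :
    Commute g (LinearMap.single R M i ∘ₗ LinearMap.proj i) := by
  have off_diag : ∀ j l, j ≠ l → ∀ v : M j, g (Pi.single j v) l = 0 := fun j l hjl v =>
    LinearMap.congr_fun (hM j l hjl (LinearMap.proj l ∘ₗ g ∘ₗ LinearMap.single R M j)) v
  refine LinearMap.pi_ext' fun j => LinearMap.ext fun v => funext fun l => ?_
  rcases eq_or_ne j i with rfl | hji
  · rcases eq_or_ne l j with rfl | hlj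
    · simp
    · simp [Pi.single_eq_of_ne hlj, off_diag j l hlj.symm]
  · simp [Pi.single_eq_of_ne hji.symm, off_diag j i hji]

theorem exists_smul_eq_pi_single (k A : Type*) [CommRing k] [Ring A] [Algebra k A] {ι : Type*}
    [Finite ι] [DecidableEq ι] (M : ι → Type*) [∀ i, AddCommGroup (M i)] [∀ i, Module k (M i)]
    [∀ i, Module A (M i)] [∀ i, IsScalarTower k A (M i)] [∀ i, Module.Finite k (M i)]
    [∀ i, IsSemisimpleModule A (M i)] (hM : ∀ j l, j ≠ l → ∀ g : M j →ₗ[A] M l, g = 0)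
    (i : ι) : ∃ a : A, ∀ m : Π j, M j, a • m = Pi.single i (m i) := by
  have : Module.Finite (End A (Π j, M j)) (Π j, M j) := .of_restrictScalars_finite k _ _
  let proj_i : End (End A (Π j, M j)) (Π j, M j) :=
    { toFun := LinearMap.single A M i ∘ₗ LinearMap.proj i
      map_add' := map_add _
      map_smul' := fun g m => LinearMap.congr_fun
        (End.commute_single_comp_proj hM g i).symm.eq m }
  obtain ⟨a, ha⟩ := Module.Finite.toModuleEnd_moduleEnd_surjective proj_i
  exact ⟨a, fun m => LinearMap.congr_fun ha m⟩

theorem matrixCoeff_mul_apply_congr {k A V : Type*} [Field k] [Ring A] [Algebra k A]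
    [AddCommGroup V] [Module k V] [Module A V] [IsScalarTower k A V] {a b : A}
    (hab : ∀ v : V, a • v = b • v) (t : V ⊗[k] Dual k V) (c : A) :
    matrixCoeff k A V t (a * c) = matrixCoeff k A V t (b * c) := by
  induction t with
  | zero => simp
  | tmul v f => exact congrArg f (by rw [mul_smul, mul_smul, hab])
  | add t u ht hu => simp only [map_add, LinearMap.add_apply, ht, hu]

theorem matrixCoeff_ranges_independent_general (k A : Type*) [Field k] [Ring A]
    [Algebra k A] (n : ℕ) (V : Fin n → Type*)
    [∀ i, AddCommGroup (V i)] [∀ i, Module k (V i)] [∀ i, Module A (V i)]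
    [∀ i, IsScalarTower k A (V i)] [∀ i, FiniteDimensional k (V i)]
    [∀ i, IsSimpleModule A (V i)]
    (hiso : ∀ i j, i ≠ j → IsEmpty (V i ≃ₗ[A] V j))
    (x : Fin n → Module.Dual k A)
    (hx : ∀ i, x i ∈ LinearMap.range (matrixCoeff k A (V i)))
    (hsum : ∑ i, x i = 0) :
    ∀ i, x i = 0 := by
  intro i
  obtain ⟨a, ha⟩ := exists_smul_eq_pi_single k A V
    (fun j l hjl _ => have := hiso j l hjl; LinearMap.eq_zero_of_isEmpty_linearEquiv _) i
  have ha_apply : ∀ j (v : V j), a • v = (if j = i then 1 else 0 : A) • v := fun j v => by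
    have := congrFun (ha (Pi.single j v)) j
    split_ifs with hji
    · subst hji; simpa using this
    · simpa [Pi.single_eq_of_ne hji] using this
  have hx_mul : ∀ j c, x j (a * c) = if j = i then x j c else 0 := fun j c => by
    obtain ⟨t, ht⟩ := hx j
    rw [← ht, matrixCoeff_mul_apply_congr (ha_apply j) t c]
    split_ifs <;> simp
  ext c
  calc x i c = ∑ j, x j (a * c) := by simp [hx_mul]
    _ = 0 := by rw [← LinearMap.sum_apply, hsum, LinearMap.zero_apply]

/-- over an algebraically closed field, the subspaces of matrix coefficients of
pairwise non-isomorphic finite-dimensional simple modules are linearly independent in `A*`. -/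
theorem matrixCoeff_ranges_independent (k A : Type*) [Field k] [IsAlgClosed k] [Ring A]
    [Algebra k A] (n : ℕ) (V : Fin n → Type*)
    [∀ i, AddCommGroup (V i)] [∀ i, Module k (V i)] [∀ i, Module A (V i)]
    [∀ i, IsScalarTower k A (V i)] [∀ i, FiniteDimensional k (V i)]
    [∀ i, IsSimpleModule A (V i)]
    (hiso : ∀ i j, i ≠ j → IsEmpty (V i ≃ₗ[A] V j))
    (x : Fin n → Module.Dual k A)
    (hx : ∀ i, x i ∈ LinearMap.range (matrixCoeff k A (V i)))
    (hsum : ∑ i, x i = 0) :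
    ∀ i, x i = 0 :=
  matrixCoeff_ranges_independent_general k A n V hiso x hx hsum
end

section
/- Assume k is algebraically closed and let B be an associative unital k-algebra. Let M ⊆ B* be the k-span of all matrix coefficients β_V(x), where V ranges over all finite-dimensional left B-modules and x ∈ V ⊗_k V*. Then every finite-dimensional left B-module is semisimple if and only if M has a Peter–Weyl decomposition, meaning: (i) M equals the sum of the subspaces β_S(S ⊗_k S*) taken over all finite-dimensional simple left B-modules S, and (ii) for every finite family of pairwise non-isomorphic finite-dimensional simple left B-modules, the corresponding subspaces β_S(S ⊗_k S*) are linearly independent (their sum in B* is direct). -/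
/-!
Matrix coefficients.  `k` is a field, `A` an associative unital `k`-algebra, and `V` a
left `A`-module which is also a `k`-vector space compatibly.  The matrix coefficient map
`β_V : V ⊗[k] V* → A*` is the `k`-linear map determined by `β_V (v ⊗ f) a = f (a • v)`.
-/

open TensorProduct

universe u

/-- A bundled finite-dimensional left `B`-module (with compatible `k`-structure). -/
structure FDMod (k B : Type u) [Field k] [Ring B] [Algebra k B] : Type (u + 1) where
  V : Type u
  [addCommGroup : AddCommGroup V]
  [modK : Module k V]
  [modB : Module B V]
  [tower : IsScalarTower k B V]
  [fd : FiniteDimensional k V]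

attribute [instance] FDMod.addCommGroup FDMod.modK FDMod.modB FDMod.tower FDMod.fd

/-!
Every functional in the range of `β_V` kills the annihilator of `V`, and these functionals
separate `B` modulo that annihilator. So if the range of `β_V` lies in the span of the matrix
coefficients of finitely many simple modules, `V` is annihilated by whatever annihilates their
product `P`; then each cyclic submodule `B ∙ v` is a quotient of `B ∙ p ⊆ P ^ d` for a `k`-basis
`p` of `P`, and `V` is semisimple. Conversely, a semisimple `V` is the sum of its simple
submodules, which gives (i). For (ii), the projection of `∏ S_j` onto `S_i` commutes with every
`B`-endomorphism by Schur's lemma, so by Jacobson density it is the action of some `c ∈ B`; then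
`x_j (b * c)` is `x_i b` for `j = i` and `0` otherwise, and summing over `j` gives `x_i b = 0`.
-/

section MatrixCoeff

variable {k B V : Type*} [Field k] [Ring B] [Algebra k B]
  [AddCommGroup V] [Module k V] [Module B V] [IsScalarTower k B V]

@[simp]
theorem matrixCoeff_tmul_apply (v : V) (f : Module.Dual k V) (b : B) :
    matrixCoeff k B V (v ⊗ₜ f) b = f (b • v) := rfl

theorem matrixCoeff_tmul_map {U : Type*} [AddCommGroup U] [Module k U] [Module B U]
    [IsScalarTower k B U] (φ : U →ₗ[B] V) (u : U) (f : Module.Dual k V) :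
    matrixCoeff k B V (φ u ⊗ₜ f) =
      matrixCoeff k B U (u ⊗ₜ (f ∘ₗ φ.restrictScalars k)) := by
  ext b
  simp

theorem apply_eq_of_mem_range_matrixCoeff {F : Module.Dual k B}
    (hF : F ∈ LinearMap.range (matrixCoeff k B V)) {b b' : B}
    (h : ∀ v : V, b • v = b' • v) :
    F b = F b' := by
  obtain ⟨t, rfl⟩ := hF
  induction t using TensorProduct.induction_on with
  | zero => simp
  | tmul v f => simp [h]
  | add x y hx hy => simp only [map_add, LinearMap.add_apply, hx, hy]

theorem mem_annihilator_iff_forall_mem_range_matrixCoeff (b : B) :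
    b ∈ Module.annihilator B V ↔ ∀ F ∈ LinearMap.range (matrixCoeff k B V), F b = 0 := by
  refine ⟨fun hb F hF => ?_, fun h => Module.mem_annihilator.mpr fun v => ?_⟩
  · rw [apply_eq_of_mem_range_matrixCoeff hF (b' := 0) fun v => by
      rw [Module.mem_annihilator.mp hb, zero_smul], map_zero]
  · exact (Module.forall_dual_apply_eq_zero_iff k (b • v)).mp fun f => h _ ⟨v ⊗ₜ f, rfl⟩

theorem range_matrixCoeff_le_iSup {ι : Type*} (U : ι → Submodule B V) (hU : ⨆ i, U i = ⊤) :
    LinearMap.range (matrixCoeff k B V) ≤ ⨆ i, LinearMap.range (matrixCoeff k B (U i)) := by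
  rw [LinearMap.range_eq_map, ← TensorProduct.span_tmul_eq_top, Submodule.map_span,
    Submodule.span_le]
  rintro _ ⟨_, ⟨v, f, rfl⟩, rfl⟩
  have hv : v ∈ ⨆ i, U i := hU ▸ trivial
  induction hv using Submodule.iSup_induction' with
  | mem i u hu =>
    exact Submodule.mem_iSup_of_mem i ⟨⟨u, hu⟩ ⊗ₜ (f ∘ₗ (U i).subtype.restrictScalars k),
      (matrixCoeff_tmul_map (U i).subtype ⟨u, hu⟩ f).symm⟩
  | zero => simp
  | add x y _ _ hx hy => rw [add_tmul, map_add]; exact Submodule.add_mem _ hx hy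

theorem annihilator_le_of_range_matrixCoeff_le_iSup {ι : Type*} (S : ι → Type*)
    [∀ i, AddCommGroup (S i)] [∀ i, Module k (S i)] [∀ i, Module B (S i)]
    [∀ i, IsScalarTower k B (S i)]
    (h : LinearMap.range (matrixCoeff k B V) ≤ ⨆ i, LinearMap.range (matrixCoeff k B (S i))) :
    ⨅ i, Module.annihilator B (S i) ≤ Module.annihilator B V := by
  intro b hb
  rw [mem_annihilator_iff_forall_mem_range_matrixCoeff (k := k)]
  intro F hF
  replace hF := h hF
  induction hF using Submodule.iSup_induction' with
  | mem i F hF =>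
    exact (mem_annihilator_iff_forall_mem_range_matrixCoeff b).mp
      ((Submodule.mem_iInf _).mp hb i) F hF
  | zero => rfl
  | add F G _ _ hF hG => rw [LinearMap.add_apply, hF, hG, add_zero]

end MatrixCoeff

section Semisimple

variable {B P V : Type*} [Ring B] [AddCommGroup P] [Module B P] [AddCommGroup V] [Module B V]

theorem IsSemisimpleModule.of_ker_toSpanSingleton_le_annihilator [IsSemisimpleModule B P] (p : P)
    (h : LinearMap.ker (LinearMap.toSpanSingleton B P p) ≤ Module.annihilator B V) :
    IsSemisimpleModule B V := by
  have hcyclic (v : V) : IsSemisimpleModule B (B ∙ v) := by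
    let T := LinearMap.toSpanSingleton B P p
    have hle : LinearMap.ker T ≤ LinearMap.ker (LinearMap.toSpanSingleton B V v) :=
      fun b hb => Module.mem_annihilator.mp (h hb) v
    have : IsSemisimpleModule B (B ⧸ LinearMap.ker T) := .congr T.quotKerEquivRange
    rw [LinearMap.span_singleton_eq_range, ← Submodule.range_liftQ _ _ hle]
    exact .range _
  exact isSemisimpleModule_of_isSemisimpleModule_submodule' hcyclic
    (eq_top_iff.mpr fun v _ => Submodule.mem_iSup_of_mem v (Submodule.mem_span_singleton_self v))

theorem IsSemisimpleModule.of_annihilator_le (k : Type*) [CommSemiring k] [Algebra k B]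
    [Module k P] [IsScalarTower k B P] [Module.Finite k P] [IsSemisimpleModule B P]
    (h : Module.annihilator B P ≤ Module.annihilator B V) : IsSemisimpleModule B V := by
  obtain ⟨n, s, hs⟩ := Module.Finite.exists_fin (R := k) (M := P)
  refine .of_ker_toSpanSingleton_le_annihilator s fun b hb =>
    h (Module.mem_annihilator.mpr fun x => ?_)
  have hx : x ∈ Submodule.span k (Set.range s) := hs ▸ trivial
  induction hx using Submodule.span_induction with
  | mem _ hmem => obtain ⟨l, rfl⟩ := hmem; exact congr_fun hb l
  | zero => exact smul_zero b
  | add x y _ _ hx hy => rw [smul_add, hx, hy, add_zero]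
  | smul c x _ hx => rw [smul_comm, hx, smul_zero]

end Semisimple

section Density

variable {B ι : Type*} [Ring B] [DecidableEq ι] (S : ι → Type*)
  [∀ i, AddCommGroup (S i)] [∀ i, Module B (S i)] [∀ i, IsSimpleModule B (S i)]

theorem proj_comp_comp_single_eq_zero (hS : ∀ i j, i ≠ j → IsEmpty (S i ≃ₗ[B] S j))
    (g : Module.End B (∀ i, S i)) {i j : ι} (hij : i ≠ j) :
    LinearMap.proj j ∘ₗ g ∘ₗ LinearMap.single B S i = 0 :=
  (LinearMap.bijective_or_eq_zero _).resolve_left fun hbij =>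
    (hS i j hij).false (.ofBijective _ hbij)

theorem commute_single_comp_proj [Finite ι] (hS : ∀ i j, i ≠ j → IsEmpty (S i ≃ₗ[B] S j))
    (i : ι) (g : Module.End B (∀ i, S i)) :
    Commute (LinearMap.single B S i ∘ₗ LinearMap.proj i) g := by
  have hg {l j : ι} (hlj : l ≠ j) (v : S l) : g (Pi.single l v) j = 0 :=
    congr($(proj_comp_comp_single_eq_zero S hS g hlj) v)
  refine LinearMap.pi_ext' fun l => LinearMap.ext fun v => funext fun j => ?_
  by_cases hli : l = i
  · subst hli
    by_cases hjl : j = l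
    · subst hjl; simp [Module.End.mul_apply]
    · simp [Module.End.mul_apply, hjl, hg (Ne.symm hjl)]
  · by_cases hji : j = i
    · subst hji; simp [Module.End.mul_apply, hli, hg hli]
    · simp [Module.End.mul_apply, hli, hji]

theorem exists_smul_eq_ite [Finite ι] (k : Type*) [CommSemiring k] [Algebra k B]
    [∀ i, Module k (S i)] [∀ i, IsScalarTower k B (S i)] [∀ i, Module.Finite k (S i)]
    (hS : ∀ i j, i ≠ j → IsEmpty (S i ≃ₗ[B] S j)) (i : ι) :
    ∃ c : B, ∀ j (v : S j), c • v = if j = i then v else 0 := by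
  let e : Module.End B (∀ j, S j) := LinearMap.single B S i ∘ₗ LinearMap.proj i
  have : Module.Finite (Module.End B (∀ j, S j)) (∀ j, S j) := .of_restrictScalars_finite k _ _
  let f : Module.End (Module.End B (∀ j, S j)) (∀ j, S j) :=
    { toFun := e
      map_add' := e.map_add
      map_smul' := fun g m => congr($(commute_single_comp_proj S hS i g) m) }
  obtain ⟨c, hc⟩ := Module.Finite.toModuleEnd_moduleEnd_surjective f
  refine ⟨c, fun j v => ?_⟩
  have := congr($hc (Pi.single j v) j)
  by_cases hji : j = i
  · subst hji; simpa [f, e] using this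
  · simpa [f, e, hji] using this

end Density

theorem eq_zero_of_sum_eq_zero_of_mem_range_matrixCoeff {k B ι : Type*} [Field k] [Ring B]
    [Algebra k B] [Fintype ι] [DecidableEq ι] (S : ι → Type*) [∀ i, AddCommGroup (S i)]
    [∀ i, Module k (S i)] [∀ i, Module B (S i)] [∀ i, IsScalarTower k B (S i)]
    [∀ i, FiniteDimensional k (S i)] [∀ i, IsSimpleModule B (S i)]
    (hS : ∀ i j, i ≠ j → IsEmpty (S i ≃ₗ[B] S j)) {x : ι → Module.Dual k B}
    (hx : ∀ i, x i ∈ LinearMap.range (matrixCoeff k B (S i))) (hsum : ∑ i, x i = 0) (i : ι) :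
    x i = 0 := by
  obtain ⟨c, hc⟩ := exists_smul_eq_ite S k hS i
  ext b
  have hxi : x i b = x i (b * c) :=
    apply_eq_of_mem_range_matrixCoeff (hx i) fun v => by rw [mul_smul, hc, if_pos rfl]
  have hxj (j : ι) (hj : j ≠ i) : x j (b * c) = 0 := by
    rw [apply_eq_of_mem_range_matrixCoeff (hx j) (b' := 0) fun v => by
      rw [mul_smul, hc, if_neg hj, smul_zero, zero_smul], map_zero]
  rw [hxi, ← Finset.sum_eq_single i (fun j _ hj => hxj j hj)
    fun hi => absurd (Finset.mem_univ i) hi, ← LinearMap.sum_apply, hsum]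
  rfl

section FDMod

variable {k B : Type u} [Field k] [Ring B] [Algebra k B]
  (V : Type u) [AddCommGroup V] [Module k V] [Module B V] [IsScalarTower k B V]
  [FiniteDimensional k V]

theorem range_matrixCoeff_le_iSup_isSimpleModule [IsSemisimpleModule B V] :
    LinearMap.range (matrixCoeff k B V) ≤
      ⨆ W : FDMod k B, ⨆ _ : IsSimpleModule B W.V, LinearMap.range (matrixCoeff k B W.V) := by
  refine (range_matrixCoeff_le_iSup (fun m : {m : Submodule B V | IsSimpleModule B m} => m.1)
    ?_).trans (iSup_le fun m => ?_)
  · rw [← sSup_eq_iSup', IsSemisimpleModule.sSup_simples_eq_top]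
  · have : FiniteDimensional k m.1 :=
      .of_injective (m.1.subtype.restrictScalars k) m.1.injective_subtype
    exact le_iSup₂_of_le (⟨m.1⟩ : FDMod k B) m.2 le_rfl

theorem IsSemisimpleModule.of_range_matrixCoeff_le_iSup_isSimpleModule
    (h : LinearMap.range (matrixCoeff k B V) ≤
      ⨆ W : FDMod k B, ⨆ _ : IsSimpleModule B W.V, LinearMap.range (matrixCoeff k B W.V)) :
    IsSemisimpleModule B V := by
  rw [iSup_subtype'] at h
  obtain ⟨s, hs⟩ := CompleteLattice.IsCompactElement.exists_finset_of_le_iSup _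
    ((Submodule.fg_iff_compact _).mp (Module.Finite.iff_fg.mp inferInstance)) _ h
  have (W : s) : IsSimpleModule B W.1.1.V := W.1.2
  refine .of_annihilator_le k (P := ∀ W : s, W.1.1.V) ?_
  rw [Module.annihilator_pi]
  exact annihilator_le_of_range_matrixCoeff_le_iSup _ <|
    hs.trans <| iSup₂_le fun W hW => le_iSup_of_le (ι := s) ⟨W, hW⟩ le_rfl

end FDMod

theorem peterWeyl_general (k B : Type u) [Field k] [Ring B] [Algebra k B] :
    (∀ (V : Type u) [AddCommGroup V] [Module k V] [Module B V] [IsScalarTower k B V]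
        [FiniteDimensional k V], IsSemisimpleModule B V) ↔
      ((⨆ W : FDMod k B, LinearMap.range (matrixCoeff k B W.V)) =
          (⨆ W : FDMod k B, ⨆ _ : IsSimpleModule B W.V,
            LinearMap.range (matrixCoeff k B W.V)) ∧
        ∀ (n : ℕ) (S : Fin n → FDMod k B), (∀ i, IsSimpleModule B (S i).V) →
          (∀ i j, i ≠ j → IsEmpty ((S i).V ≃ₗ[B] (S j).V)) →
          ∀ x : Fin n → Module.Dual k B,
            (∀ i, x i ∈ LinearMap.range (matrixCoeff k B (S i).V)) →
            ∑ i, x i = 0 → ∀ i, x i = 0) := by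
  refine ⟨fun hss => ⟨?_, ?_⟩, fun ⟨hsimple, _⟩ V _ _ _ _ _ => ?_⟩
  · refine le_antisymm (iSup_le fun W => ?_) (iSup_mono fun W => iSup_le fun _ => le_rfl)
    have := hss W.V
    exact range_matrixCoeff_le_iSup_isSimpleModule W.V
  · intro n S hS hiso x hx hsum
    exact eq_zero_of_sum_eq_zero_of_mem_range_matrixCoeff (fun i => (S i).V) hiso hx hsum
  · exact .of_range_matrixCoeff_le_iSup_isSimpleModule V <| hsimple ▸
      le_iSup (fun W : FDMod k B => LinearMap.range (matrixCoeff k B W.V)) ⟨V⟩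

/-- let `M ⊆ B*` be the span of all matrix coefficients of finite-dimensional left
`B`-modules.  Every finite-dimensional left `B`-module is semisimple if and only if `M` has a
Peter–Weyl decomposition: (i) `M` is the sum of the subspaces `β_S (S ⊗ S*)` over all
finite-dimensional simple left `B`-modules `S`, and (ii) for pairwise non-isomorphic
finite-dimensional simple modules these subspaces are linearly independent. -/
theorem peterWeyl (k B : Type u) [Field k] [IsAlgClosed k] [Ring B] [Algebra k B] :
    (∀ (V : Type u) [AddCommGroup V] [Module k V] [Module B V] [IsScalarTower k B V]
        [FiniteDimensional k V], IsSemisimpleModule B V) ↔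
      ((⨆ W : FDMod k B, LinearMap.range (matrixCoeff k B W.V)) =
          (⨆ W : FDMod k B, ⨆ _ : IsSimpleModule B W.V,
            LinearMap.range (matrixCoeff k B W.V)) ∧
        ∀ (n : ℕ) (S : Fin n → FDMod k B), (∀ i, IsSimpleModule B (S i).V) →
          (∀ i j, i ≠ j → IsEmpty ((S i).V ≃ₗ[B] (S j).V)) →
          ∀ x : Fin n → Module.Dual k B,
            (∀ i, x i ∈ LinearMap.range (matrixCoeff k B (S i).V)) →
            ∑ i, x i = 0 → ∀ i, x i = 0) :=
  peterWeyl_general k B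
end

section
/- Let B be an associative unital k-algebra. Every finite-dimensional left B-module is semisimple if and only if every extension of finite-dimensional simple B-modules splits, i.e. for every finite-dimensional left B-module E and every submodule W ⊆ E such that both W and the quotient E/W are simple, W is a direct summand of E. -/
/-!
Splitting implies semisimplicity by induction on the dimension. Let `A` be a simple submodule
of `V`; by induction `V ⧸ A` is semisimple. Every submodule `T` covering `A` is an extension of
the simple module `T ⧸ A` by `A`, so it splits as `T = A ⊕ X` with `X` simple. The simple
submodules of `V ⧸ A` are exactly the images of such `T`, so the sum of the simple submodules
of `V` contains `A` and maps onto `V ⧸ A`, hence is all of `V`.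
-/

universe u

open Module Submodule

theorem Submodule.covBy_comap_mkQ_of_isAtom {R M : Type*} [Ring R] [AddCommGroup M] [Module R M]
    {p : Submodule R M} {U : Submodule R (M ⧸ p)} (hU : IsAtom U) : p ⋖ U.comap p.mkQ :=
  Set.Ici.isAtom_iff.mp (((comapMkQRelIso p).isAtom_iff U).mpr hU)

theorem IsSemisimpleModule.of_isAtom_of_quotient {R M : Type*} [Ring R] [AddCommGroup M]
    [Module R M] {p : Submodule R M} (hp : IsAtom p) [IsSemisimpleModule R (M ⧸ p)]
    (hcov : ∀ T, p ⋖ T → ∃ X, IsAtom X ∧ p ⊔ X = T) : IsSemisimpleModule R M := by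
  set S := sSup {m : Submodule R M | IsSimpleModule R m}
  have le_S : ∀ m : Submodule R M, IsAtom m → m ≤ S := fun m hm ↦
    le_sSup (isSimpleModule_iff_isAtom.mpr hm)
  have hpS : p ≤ S := le_S p hp
  have map_S : S.map p.mkQ = ⊤ := by
    rw [eq_top_iff, ← sSup_simples_eq_top, sSup_le_iff]
    intro U hU
    obtain ⟨X, hX, hpX⟩ := hcov _ (covBy_comap_mkQ_of_isAtom (isSimpleModule_iff_isAtom.mp hU))
    rw [← map_comap_eq_of_surjective p.mkQ_surjective U, ← hpX]
    exact map_mono (sup_le hpS (le_S X hX))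
  refine .of_sSup_simples_eq_top (show S = ⊤ from ?_)
  rw [← sup_eq_right.mpr hpS, ← comap_map_mkQ, map_S, comap_top]

def SimpleExtensionsSplit (k B : Type u) [Field k] [Ring B] [Algebra k B] : Prop :=
  ∀ (E : Type u) [AddCommGroup E] [Module k E] [Module B E] [IsScalarTower k B E]
      [FiniteDimensional k E] (W : Submodule B E),
    IsSimpleModule B W → IsSimpleModule B (E ⧸ W) →
    ∃ W' : Submodule B E, W ⊓ W' = ⊥ ∧ W ⊔ W' = ⊤

namespace SimpleExtensionsSplit

variable {k B : Type u} [Field k] [Ring B] [Algebra k B]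
  {V : Type u} [AddCommGroup V] [Module k V] [Module B V] [IsScalarTower k B V]
  [FiniteDimensional k V]

theorem exists_isAtom_sup_eq (H : SimpleExtensionsSplit k B)
    {A T : Submodule B V} (hA : IsAtom A) (hAT : A ⋖ T) : ∃ X, IsAtom X ∧ A ⊔ X = T := by
  have : FiniteDimensional k T := inferInstanceAs (FiniteDimensional k (T.restrictScalars k))
  obtain ⟨W', hinf, hsup⟩ := H T (A.comap T.subtype)
    ((comapSubtypeEquivOfLe hAT.le).isSimpleModule_iff.mpr (isSimpleModule_iff_isAtom.mpr hA))
    ((covBy_iff_quot_is_simple hAT.le).mp hAT)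
  have map_A : (A.comap T.subtype).map T.subtype = A := by
    rw [map_comap_subtype, inf_eq_right.mpr hAT.le]
  have hsup' : A ⊔ W'.map T.subtype = T := by
    rw [← map_A, ← Submodule.map_sup, hsup, map_subtype_top]
  have hinf' : A ⊓ W'.map T.subtype = ⊥ := by
    rw [← map_A, ← map_inf _ T.injective_subtype, hinf, Submodule.map_bot]
  refine ⟨_, ?_, hsup'⟩
  have := inf_covBy_of_covBy_sup_left (hsup'.symm ▸ hAT)
  rwa [hinf', bot_covBy_iff] at this

theorem isSemisimpleModule (H : SimpleExtensionsSplit k B) : IsSemisimpleModule B V := by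
  induction hn : finrank k V using Nat.strong_induction_on generalizing V with
  | _ n IH =>
  rcases subsingleton_or_nontrivial V with hV | hV
  · exact (isSemisimpleModule_iff B V).mpr Subsingleton.instComplementedLattice
  have : IsArtinian B V := isArtinian_of_tower k inferInstance
  obtain ⟨A, hA⟩ := IsAtomic.exists_atom (Submodule B V)
  have : FiniteDimensional k A := inferInstanceAs (FiniteDimensional k (A.restrictScalars k))
  have : Nontrivial A := (isSimpleModule_iff_isAtom.mpr hA).nontrivial
  have : IsSemisimpleModule B (V ⧸ A) := IH _ (by
    rw [← hn, finrank_quotient]; exact Nat.sub_lt finrank_pos finrank_pos) rfl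
  exact .of_isAtom_of_quotient hA fun T hT ↦ H.exists_isAtom_sup_eq hA hT

end SimpleExtensionsSplit

/-- every finite-dimensional left `B`-module is semisimple if and only if every
extension of finite-dimensional simple `B`-modules splits: for every finite-dimensional left
`B`-module `E` and submodule `W ⊆ E` with `W` and `E ⧸ W` simple, `W` is a direct summand. -/
theorem semisimple_iff_ext_simples_split (k B : Type u) [Field k] [Ring B] [Algebra k B] :
    (∀ (V : Type u) [AddCommGroup V] [Module k V] [Module B V] [IsScalarTower k B V]
        [FiniteDimensional k V], IsSemisimpleModule B V) ↔
      (∀ (E : Type u) [AddCommGroup E] [Module k E] [Module B E] [IsScalarTower k B E]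
          [FiniteDimensional k E] (W : Submodule B E),
        IsSimpleModule B W → IsSimpleModule B (E ⧸ W) →
        ∃ W' : Submodule B E, W ⊓ W' = ⊥ ∧ W ⊔ W' = ⊤) := by
  constructor
  · intro h E _ _ _ _ _ W _ _
    have := h E
    obtain ⟨W', hW'⟩ := exists_isCompl W
    exact ⟨W', hW'.inf_eq_bot, hW'.sup_eq_top⟩
  · intro H V _ _ _ _ _
    exact SimpleExtensionsSplit.isSemisimpleModule H
end

section
/- Let H be a Hopf algebra over a field k and let c be a central element of H satisfying: (i) for every finite-dimensional simple left H-module V, c acts as zero on V if and only if V is isomorphic to the trivial module; and (ii) every finite-dimensional left H-module E containing a submodule W such that both W and E/W are isomorphic to the trivial module decomposes as an internal direct sum of W and another submodule. If V is a finite-dimensional left H-module and W ⊆ V is a simple submodule such that V/W is isomorphic to the trivial module, then there exists a submodule W' ⊆ V with W ∩ W' = 0 and W + W' = V. -/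
/-! If `W` is trivial this is the extension hypothesis. Otherwise `c` acts as zero on the trivial
module `V ⧸ W` but not on the simple module `W`; since `c` is central, `v ↦ c • v` is `H`-linear,
it maps `V` into `W`, and by Schur it restricts to an automorphism of `W`. Its kernel is then a
complement of `W`. -/

universe u

/-- `V` is isomorphic to the trivial `H`-module, i.e. to `k` with action `h • x = ε(h) x`. -/
def IsTrivialRep (k H : Type*) (V : Type*) [Field k] [Ring H] [HopfAlgebra k H]
    [AddCommGroup V] [Module k V] [Module H V] : Prop :=
  ∃ e : V ≃ₗ[k] k, ∀ (h : H) (v : V), e (h • v) = Coalgebra.counit (R := k) h * e v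

open LinearMap Function

theorem IsSimpleModule.of_restrictScalars (S : Type*) {R M : Type*} [Ring S] [Ring R]
    [AddCommGroup M] [Module S M] [Module R M] [SMul S R] [IsScalarTower S R M]
    [IsSimpleModule S M] : IsSimpleModule R M := by
  have : Nontrivial M := IsSimpleModule.nontrivial S M
  refine (isSimpleModule_iff R M).mpr ⟨fun p => ?_⟩
  rcases eq_bot_or_eq_top (p.restrictScalars S) with hp | hp
  · exact Or.inl ((Submodule.restrictScalars_eq_bot_iff S R M).mp hp)
  · exact Or.inr ((Submodule.restrictScalars_eq_top_iff S R M).mp hp)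

theorem IsTrivialRep.isSimpleModule {k H M : Type*} [Field k] [Ring H] [HopfAlgebra k H]
    [AddCommGroup M] [Module k M] [Module H M] [IsScalarTower k H M]
    (h : IsTrivialRep k H M) : IsSimpleModule H M := by
  obtain ⟨e, -⟩ := h
  have : IsSimpleModule k M :=
    isSimpleModule_iff_finrank_eq_one.mpr (by rw [e.finrank_eq, Module.finrank_self])
  exact IsSimpleModule.of_restrictScalars k

def centralSMul {R : Type*} (M : Type*) [Ring R] [AddCommGroup M] [Module R M] (c : R)
    (hc : ∀ r : R, c * r = r * c) : M →ₗ[R] M where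
  toFun v := c • v
  map_add' := smul_add c
  map_smul' r v := by simp only [RingHom.id_apply, smul_smul, hc]

@[simp]
theorem centralSMul_apply {R M : Type*} [Ring R] [AddCommGroup M] [Module R M] (c : R)
    (hc : ∀ r : R, c * r = r * c) (v : M) : centralSMul M c hc v = c • v :=
  rfl

theorem isCompl_ker_of_range_le {R M : Type*} [Ring R] [AddCommGroup M] [Module R M]
    {f : M →ₗ[R] M} {W : Submodule R M} (hrange : range f ≤ W)
    (hbij : Bijective (f.restrict (p := W) (q := W) fun w _ => hrange (mem_range_self f w))) :
    IsCompl W (ker f) := by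
  constructor
  · rw [Submodule.disjoint_def]
    intro w hw hker
    have : f.restrict (p := W) (q := W) (fun w _ => hrange (mem_range_self f w)) ⟨w, hw⟩ = 0 :=
      Subtype.ext hker
    simpa using hbij.injective (this.trans (map_zero _).symm)
  · rw [Submodule.codisjoint_iff_exists_add_eq]
    intro v
    obtain ⟨w, hw⟩ := hbij.surjective ⟨f v, hrange (mem_range_self f v)⟩
    refine ⟨w, v - w, w.2, ?_, add_sub_cancel _ _⟩
    rw [mem_ker, map_sub, sub_eq_zero]
    exact (congrArg Subtype.val hw).symm

/-- under the Casimir hypotheses, a simple submodule `W` of a finite-dimensional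
module `V` with trivial quotient `V ⧸ W` has a complement. -/
theorem complement_of_simple_sub_trivial_quot (k H : Type u) [Field k] [Ring H]
    [HopfAlgebra k H] (c : H) (hc : ∀ h : H, c * h = h * c)
    (hCasimir : ∀ (V : Type u) [AddCommGroup V] [Module k V] [Module H V]
      [IsScalarTower k H V] [FiniteDimensional k V] [IsSimpleModule H V],
      (∀ v : V, c • v = 0) ↔ IsTrivialRep k H V)
    (hExt : ∀ (E : Type u) [AddCommGroup E] [Module k E] [Module H E]
      [IsScalarTower k H E] [FiniteDimensional k E] (W : Submodule H E),
      IsTrivialRep k H W → IsTrivialRep k H (E ⧸ W) →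
      ∃ W' : Submodule H E, W ⊓ W' = ⊥ ∧ W ⊔ W' = ⊤)
    (V : Type u) [AddCommGroup V] [Module k V] [Module H V] [IsScalarTower k H V]
    [FiniteDimensional k V] (W : Submodule H V)
    (hW : IsSimpleModule H W) (hquot : IsTrivialRep k H (V ⧸ W)) :
    ∃ W' : Submodule H V, W ⊓ W' = ⊥ ∧ W ⊔ W' = ⊤ := by
  by_cases hWtriv : IsTrivialRep k H W
  · exact hExt V W hWtriv hquot
  have : FiniteDimensional k W := .of_injective (W.subtype.restrictScalars k) W.injective_subtype
  have : IsSimpleModule H (V ⧸ W) := hquot.isSimpleModule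
  let φ := centralSMul V c hc
  have hrange : range φ ≤ W := by
    rintro _ ⟨v, rfl⟩
    rw [← Submodule.Quotient.mk_eq_zero, centralSMul_apply, Submodule.Quotient.mk_smul]
    exact (hCasimir (V ⧸ W)).mpr hquot _
  have hφW : φ.restrict (p := W) (q := W) (fun w _ => hrange (mem_range_self φ w)) ≠ 0 :=
    fun h => hWtriv <| (hCasimir W).mp fun w =>
      Subtype.ext (congrArg Subtype.val (LinearMap.congr_fun h w))
  have hcompl := isCompl_ker_of_range_le hrange (bijective_of_ne_zero hφW)
  exact ⟨ker φ, hcompl.inf_eq_bot, hcompl.sup_eq_top⟩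
end
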